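/- arXiv:quant-ph/0406064 — 3 statements merged into one kernel-verified Lean document; each statement's English description precedes it below -/
import Mathlib

section
/- For every real ℓ×ℓ matrix A there exists a real orthogonal matrix o (with o·oᵀ = I) such that all diagonal entries of o·A·oᵀ are equal (each thus equals Tr(A)/ℓ). -/
open Matrix Real

namespace Stmt4

variable {n : ℕ}

noncomputable def cc (a b : Fin n) (θ : ℝ) (x : Fin n) : ℝ :=
  if x = a then Real.cos θ else if x = b then -Real.sin θ else 0

noncomputable def ss (a b : Fin n) (θ : ℝ) (x : Fin n) : ℝ :=
  if x = a then Real.sin θ else if x = b then Real.cos θ else 0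

def dd (a b : Fin n) (x : Fin n) : ℝ := if x = a ∨ x = b then 0 else 1

noncomputable def rot (a b : Fin n) (θ : ℝ) : Matrix (Fin n) (Fin n) ℝ :=
  Matrix.of fun x y => cc a b θ x * (if y = a then (1:ℝ) else 0)
    + ss a b θ x * (if y = b then (1:ℝ) else 0) + dd a b x * (if y = x then (1:ℝ) else 0)

lemma sum_rot_mul (a b : Fin n) (θ : ℝ) (x : Fin n) (w : Fin n → ℝ) :
    ∑ k, rot a b θ x k * w k = cc a b θ x * w a + ss a b θ x * w b + dd a b x * w x := by
  simp [rot, add_mul, mul_ite, ite_mul, Finset.sum_add_distrib,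
    Finset.sum_ite_eq, mul_assoc]

lemma rot_apply_a (a b : Fin n) (hab : a ≠ b) (θ : ℝ) (y : Fin n) :
    rot a b θ y a = cc a b θ y := by
  rcases eq_or_ne a y with rfl|h
  · simp [rot, dd, hab]
  · simp [rot, dd, hab, h]

lemma rot_apply_b (a b : Fin n) (hab : a ≠ b) (θ : ℝ) (y : Fin n) :
    rot a b θ y b = ss a b θ y := by
  rcases eq_or_ne b y with rfl|h
  · simp [rot, dd, hab.symm]
  · simp [rot, dd, hab.symm, h, h.symm]

end Stmt4
namespace Stmt4
variable {n : ℕ}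

lemma sum_mul_rot (a b : Fin n) (θ : ℝ) (x : Fin n) (w : Fin n → ℝ) :
    ∑ k, w k * rot a b θ x k = cc a b θ x * w a + ss a b θ x * w b + dd a b x * w x := by
  rw [← sum_rot_mul a b θ x w]
  exact Finset.sum_congr rfl fun k _ => mul_comm _ _

lemma rot_orth (a b : Fin n) (hab : a ≠ b) (θ : ℝ) :
    rot a b θ * (rot a b θ)ᵀ = 1 := by
  ext x y
  rw [Matrix.mul_apply]
  simp only [Matrix.transpose_apply]
  rw [sum_rot_mul, rot_apply_a _ _ hab, rot_apply_b _ _ hab]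
  rcases eq_or_ne x a with rfl|hxa
  · rcases eq_or_ne y x with rfl|hy
    · simp [cc, ss, dd, Matrix.one_apply]
      nlinarith [Real.sin_sq_add_cos_sq θ]
    · rcases eq_or_ne y b with rfl|hyb
      · simp [cc, ss, dd, Matrix.one_apply, hab, hy.symm, hy]; ring
      · simp [cc, ss, dd, Matrix.one_apply, hab, hy.symm, hy, hyb]
  · rcases eq_or_ne x b with rfl|hxb
    · rcases eq_or_ne y x with rfl|hy
      · simp [cc, ss, dd, Matrix.one_apply, hab.symm]
        nlinarith [Real.sin_sq_add_cos_sq θ]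
      · rcases eq_or_ne y a with rfl|hya
        · simp [cc, ss, dd, Matrix.one_apply, hab, hy.symm, hy]; ring
        · simp [cc, ss, dd, Matrix.one_apply, hab.symm, hy.symm, hy, hya]
    · have h1 : cc a b θ x = 0 := by simp [cc, hxa, hxb]
      have h2 : ss a b θ x = 0 := by simp [ss, hxa, hxb]
      have h3 : dd a b x = 1 := by simp [dd, hxa, hxb]
      rw [h1, h2, h3]
      rcases eq_or_ne x y with rfl|hxy
      · simp [rot, dd, hxa, hxb, Matrix.one_apply]
      · simp [rot, dd, hxa, hxb, hxy, hxy.symm, Matrix.one_apply]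

lemma rot_conj_aa (a b : Fin n) (_hab : a ≠ b) (θ : ℝ) (A : Matrix (Fin n) (Fin n) ℝ) :
    (rot a b θ * A * (rot a b θ)ᵀ) a a =
      Real.cos θ ^ 2 * A a a + Real.cos θ * Real.sin θ * (A a b + A b a)
        + Real.sin θ ^ 2 * A b b := by
  rw [Matrix.mul_apply]
  simp only [Matrix.transpose_apply]
  rw [sum_mul_rot]
  simp only [Matrix.mul_apply]
  simp only [sum_rot_mul]
  simp [cc, ss, dd]
  ring

lemma exists_entry (A : Matrix (Fin (n+1)) (Fin (n+1)) ℝ) (c : ℝ)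
    (hc : A.trace = (n+1 : ℕ) * c) :
    ∃ o : Matrix (Fin (n+1)) (Fin (n+1)) ℝ, o * oᵀ = 1 ∧ (o * A * oᵀ) 0 0 = c := by
  have key : ∀ j : Fin (n+1), j ≠ 0 → c ∈ Set.uIcc (A 0 0) (A j j) →
      ∃ o : Matrix (Fin (n+1)) (Fin (n+1)) ℝ, o * oᵀ = 1 ∧ (o * A * oᵀ) 0 0 = c := by
    intro j hj hmem
    have h0j : (0 : Fin (n+1)) ≠ j := fun h => hj h.symm
    set f : ℝ → ℝ := fun θ =>
      Real.cos θ ^ 2 * A 0 0 + Real.cos θ * Real.sin θ * (A 0 j + A j 0)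
        + Real.sin θ ^ 2 * A j j with hf
    have hcont : Continuous f := by fun_prop
    have hf0 : f 0 = A 0 0 := by simp [hf]
    have hfpi : f (Real.pi / 2) = A j j := by simp [hf]
    have hsub := intermediate_value_uIcc (a := 0) (b := Real.pi / 2) hcont.continuousOn
    rw [hf0, hfpi] at hsub
    obtain ⟨θ, -, hθ⟩ := hsub hmem
    exact ⟨rot 0 j θ, rot_orth 0 j h0j θ, by rw [rot_conj_aa 0 j h0j θ A]; exact hθ⟩
  rcases lt_trichotomy (A 0 0) c with hlt | heq | hgt
  · -- need j with c ≤ A j j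
    by_cases hall : ∀ j : Fin (n+1), A j j < c
    · exfalso
      have : A.trace < (n+1 : ℕ) * c := by
        rw [Matrix.trace]
        calc ∑ i, A.diag i < ∑ _i : Fin (n+1), c :=
              Finset.sum_lt_sum_of_nonempty ⟨0, Finset.mem_univ 0⟩ fun i _ => hall i
          _ = (n+1 : ℕ) * c := by simp [Finset.sum_const, mul_comm]
      linarith [hc ▸ this]
    · push_neg at hall
      obtain ⟨j, hj⟩ := hall
      have hj0 : j ≠ 0 := by rintro rfl; linarith
      exact key j hj0 (Set.mem_uIcc.mpr (Or.inl ⟨le_of_lt hlt, hj⟩))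
  · exact ⟨1, by simp, by simp [heq]⟩
  · by_cases hall : ∀ j : Fin (n+1), c < A j j
    · exfalso
      have : (n+1 : ℕ) * c < A.trace := by
        rw [Matrix.trace]
        calc ((n+1 : ℕ) : ℝ) * c = ∑ _i : Fin (n+1), c := by simp [Finset.sum_const, mul_comm]
          _ < ∑ i, A.diag i :=
              Finset.sum_lt_sum_of_nonempty ⟨0, Finset.mem_univ 0⟩ fun i _ => hall i
      linarith [hc ▸ this]
    · push_neg at hall
      obtain ⟨j, hj⟩ := hall
      have hj0 : j ≠ 0 := by rintro rfl; linarith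
      exact key j hj0 (Set.mem_uIcc.mpr (Or.inr ⟨hj, le_of_lt hgt⟩))

def extM (Q : Matrix (Fin n) (Fin n) ℝ) : Matrix (Fin (n+1)) (Fin (n+1)) ℝ :=
  Matrix.of (Fin.cons (Fin.cons 1 0) (fun i => Fin.cons 0 (Q i)))

lemma extM_orth {Q : Matrix (Fin n) (Fin n) ℝ} (hQ : Q * Qᵀ = 1) :
    extM Q * (extM Q)ᵀ = 1 := by
  ext x y
  rw [Matrix.mul_apply]
  simp only [Matrix.transpose_apply]
  rw [Fin.sum_univ_succ]
  induction x using Fin.cases with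
  | zero =>
    induction y using Fin.cases with
    | zero => simp [extM, Matrix.one_apply]
    | succ j => simp [extM, Matrix.one_apply, (Fin.succ_ne_zero j).symm]
  | succ i =>
    induction y using Fin.cases with
    | zero => simp [extM, Matrix.one_apply, Fin.succ_ne_zero i]
    | succ j =>
      have h := congrFun (congrFun hQ i) j
      rw [Matrix.mul_apply] at h
      simp only [Matrix.transpose_apply] at h
      simp [extM, Matrix.one_apply, Fin.succ_inj, h]

lemma extM_conj_zero {Q : Matrix (Fin n) (Fin n) ℝ} (M : Matrix (Fin (n+1)) (Fin (n+1)) ℝ) :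
    (extM Q * M * (extM Q)ᵀ) 0 0 = M 0 0 := by
  rw [Matrix.mul_apply]
  simp only [Matrix.transpose_apply]
  rw [Fin.sum_univ_succ]
  simp only [extM, Matrix.of_apply, Fin.cons_zero, Fin.cons_succ, Pi.zero_apply,
    mul_zero, mul_one, Finset.sum_const_zero, add_zero]
  rw [Matrix.mul_apply, Fin.sum_univ_succ]
  simp [extM]

lemma extM_conj_succ {Q : Matrix (Fin n) (Fin n) ℝ} (M : Matrix (Fin (n+1)) (Fin (n+1)) ℝ)
    (i : Fin n) :
    (extM Q * M * (extM Q)ᵀ) i.succ i.succ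
      = (Q * M.submatrix Fin.succ Fin.succ * Qᵀ) i i := by
  rw [Matrix.mul_apply, Matrix.mul_apply]
  simp only [Matrix.transpose_apply]
  rw [Fin.sum_univ_succ]
  simp only [extM, Matrix.of_apply, Fin.cons_zero, Fin.cons_succ, mul_zero, zero_add]
  refine Finset.sum_congr rfl fun l _ => ?_
  rw [Matrix.mul_apply, Matrix.mul_apply, Fin.sum_univ_succ]
  simp [extM, Matrix.submatrix_apply]

lemma main_lemma : ∀ (m : ℕ) (A : Matrix (Fin m) (Fin m) ℝ) (c : ℝ),
    A.trace = (m : ℕ) * c →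
    ∃ o : Matrix (Fin m) (Fin m) ℝ, o * oᵀ = 1 ∧ ∀ i, (o * A * oᵀ) i i = c := by
  intro m
  induction m with
  | zero => exact fun A c _ => ⟨1, by simp, fun i => i.elim0⟩
  | succ n ih =>
    intro A c hc
    obtain ⟨o₁, ho₁, h00⟩ := exists_entry A c hc
    set M := o₁ * A * o₁ᵀ with hM
    have htrM : M.trace = A.trace := by
      rw [hM, Matrix.trace_mul_comm, ← Matrix.mul_assoc,
        (mul_eq_one_comm).mp ho₁, Matrix.one_mul]
    set B := M.submatrix Fin.succ Fin.succ with hB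
    have htrB : B.trace = (n : ℕ) * c := by
      have h1 : M.trace = M 0 0 + B.trace := by
        rw [Matrix.trace, Matrix.trace, Fin.sum_univ_succ]
        simp [hB, Matrix.diag]
      have : ((n:ℝ)+1) * c = c + (n : ℝ) * c := by ring
      rw [htrM, hc] at h1
      push_cast at h1 ⊢
      rw [h00] at h1
      linarith
    obtain ⟨Q, hQ, hQd⟩ := ih B c htrB
    refine ⟨extM Q * o₁, ?_, ?_⟩
    · rw [Matrix.transpose_mul, Matrix.mul_assoc, ← Matrix.mul_assoc o₁, ho₁,
        Matrix.one_mul, extM_orth hQ]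
    · intro i
      have hrw : extM Q * o₁ * A * (extM Q * o₁)ᵀ = extM Q * M * (extM Q)ᵀ := by
        rw [Matrix.transpose_mul, hM]
        noncomm_ring
      rw [hrw]
      induction i using Fin.cases with
      | zero => rw [extM_conj_zero]; exact h00
      | succ j => rw [extM_conj_succ]; exact hQd j

end Stmt4

open Stmt4 in
/-- Every real square matrix can be orthogonally conjugated so that all diagonal
entries are equal (to Tr(A)/ℓ). -/
theorem stmt_4 (ℓ : ℕ) (hℓ : 0 < ℓ) (A : Matrix (Fin ℓ) (Fin ℓ) ℝ) :
    ∃ o : Matrix (Fin ℓ) (Fin ℓ) ℝ, o * oᵀ = 1 ∧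
      ∀ i : Fin ℓ, (o * A * oᵀ) i i = A.trace / ℓ := by
  refine main_lemma ℓ A (A.trace / ℓ) ?_
  field_simp
end

section
/- Let ρ be an N×N density matrix and ω a symmetric unitary. For any ensemble {x_j}_{j=0}^{ℓ-1} with ρ = ∑_j x_j x_j†, setting η_{jk} = x_j† ω conj(x_k) and letting λ_0 ≥ λ_1 ≥ ... denote the eigenvalues of (η·conj(η))^{1/2} in nonincreasing order, we have ∑_{j=0}^{ℓ-1} |η_{jj}| ≥ λ_0 − ∑_{p=1}^{ℓ-1} λ_p. -/
open Matrix Finset Polynomial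
open scoped ComplexOrder

/-!
A complex symmetric matrix factors as `A = U D Uᵀ` with `U` unitary and `D` real, nonnegative and
diagonal (Takagi). The columns of `U` are orthonormal con-eigenvectors `A ū = μ u`, found one at a
time: the orthogonal complement of those already found is invariant under the antilinear map
`J v = A v̄`, and `J² = A Ā` has an eigenvector `v` there whose eigenvalue `c = ‖J v‖² / ‖v‖²` is
nonnegative; then `√c v + J v`, or `i v` if that vanishes, is a con-eigenvector.

For `η = U D Uᵀ` the positive square root of `η η̄ = U D² Uᴴ` is `U D Uᴴ`, so the `λ`'s are the
entries of `D`. Since `η_jj = ∑_p λ_p u_jp²` and `∑_j |u_jp|² = 1`, the triangle inequality gives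
`∑_j |η_jj| ≥ λ_i - ∑_{p ≠ i} λ_p` for every `i`, in particular for the `i` with `λ_i = λ_0`.
-/

theorem norm_sub_sum_erase_norm_le_norm_sum {ι E : Type*} [DecidableEq ι]
    [SeminormedAddCommGroup E] {s : Finset ι} {i : ι} (hi : i ∈ s) (z : ι → E) :
    ‖z i‖ - ∑ p ∈ s.erase i, ‖z p‖ ≤ ‖∑ p ∈ s, z p‖ := by
  rw [← add_sum_erase s z hi]
  have := norm_sum_le (s.erase i) z
  have := norm_sub_norm_le (z i) (-∑ p ∈ s.erase i, z p)
  rw [norm_neg, sub_neg_eq_add] at this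
  linarith

theorem Polynomial.map_univ_eq_of_prod_X_sub_C_eq {ι R : Type*} [Fintype ι] [CommRing R]
    [IsDomain R] {a b : ι → R} (h : ∏ i, (X - C (a i)) = ∏ i, (X - C (b i))) :
    univ.val.map a = univ.val.map b := by
  have key (c : ι → R) : ∏ i, (X - C (c i)) = ((univ.val.map c).map fun r => X - C r).prod := by
    rw [Multiset.map_map]; rfl
  simpa only [key, roots_multiset_prod_X_sub_C] using congrArg roots h

namespace Matrix

@[simp]
theorem conjTranspose_map_conj {m n : Type*} (U : Matrix m n ℂ) :
    Uᴴ.map (starRingEnd ℂ) = Uᵀ := by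
  ext; simp

theorem IsSymm.dotProduct_mulVec_comm {ι R : Type*} [Fintype ι] [CommSemiring R] {A : Matrix ι ι R}
    (hA : A.IsSymm) (u v : ι → R) : u ⬝ᵥ A *ᵥ v = v ⬝ᵥ A *ᵥ u := by
  rw [dotProduct_mulVec, ← vecMul_transpose, hA.eq, dotProduct_comm]

theorem IsSymm.of_star_dotProduct_mulVec_star {ι κ : Type*} [Fintype κ] {ω : Matrix κ κ ℂ}
    (hω : ω.IsSymm) (x : ι → κ → ℂ) :
    (of fun j k => star (x j) ⬝ᵥ ω *ᵥ star (x k)).IsSymm :=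
  IsSymm.ext fun _ _ => hω.dotProduct_mulVec_comm _ _

variable {ι : Type*} [Fintype ι]

theorem map_conj_mulVec (A : Matrix ι ι ℂ) (v : ι → ℂ) :
    A.map (starRingEnd ℂ) *ᵥ v = star (A *ᵥ star v) := by
  ext k
  simp [mulVec, dotProduct, star_sum]

theorem mulVec_star_mulVec_star (A : Matrix ι ι ℂ) (v : ι → ℂ) :
    A *ᵥ star (A *ᵥ star v) = (A * A.map (starRingEnd ℂ)) *ᵥ v := by
  rw [← mulVec_mulVec, map_conj_mulVec]

theorem mulVec_star_ofReal_smul (A : Matrix ι ι ℂ) (r : ℝ) (v : ι → ℂ) :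
    A *ᵥ star ((r : ℂ) • v) = (r : ℂ) • A *ᵥ star v := by
  rw [star_smul, Complex.star_def, Complex.conj_ofReal, mulVec_smul]

theorem exists_ofReal_smul_star_dotProduct_self_eq_one {v : ι → ℂ} (hv : v ≠ 0) :
    ∃ r : ℝ, star ((r : ℂ) • v) ⬝ᵥ ((r : ℂ) • v) = 1 := by
  obtain ⟨t, ht, htv⟩ := RCLike.pos_iff_exists_ofReal.mp (dotProduct_star_self_pos_iff.mpr hv)
  rw [RCLike.ofReal_eq_complex_ofReal] at htv
  refine ⟨(Real.sqrt t)⁻¹, ?_⟩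
  rw [star_smul, smul_dotProduct, dotProduct_smul, ← htv, Complex.star_def, Complex.conj_ofReal,
    smul_eq_mul, smul_eq_mul, ← mul_assoc]
  norm_cast
  rw [← mul_inv, Real.mul_self_sqrt ht.le, inv_mul_cancel₀ ht.ne']

theorem star_dotProduct_vecCons_eq_ite {k : ℕ} {u : Fin k → ι → ℂ}
    (hu : ∀ i j, star (u i) ⬝ᵥ u j = if i = j then 1 else 0) {w : ι → ℂ}
    (hw : star w ⬝ᵥ w = 1) (huw : ∀ i, star (u i) ⬝ᵥ w = 0) (i j : Fin (k + 1)) :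
    star (vecCons w u i) ⬝ᵥ vecCons w u j = if i = j then 1 else 0 := by
  induction i using Fin.cases <;> induction j using Fin.cases <;>
    simp [hu, hw, huw, star_dotProduct w, (Fin.succ_ne_zero _).symm]

variable {A : Matrix ι ι ℂ}

theorem IsSymm.exists_coneigenvector_of_mulVec_eq_smul (hA : A.IsSymm)
    {W : Submodule ℂ (ι → ℂ)} (hW : ∀ w ∈ W, A *ᵥ star w ∈ W) {v : ι → ℂ} (hvW : v ∈ W)
    (hv : v ≠ 0) {c : ℂ} (hc : (A * A.map (starRingEnd ℂ)) *ᵥ v = c • v) :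
    ∃ w ∈ W, w ≠ 0 ∧ ∃ μ : ℝ, 0 ≤ μ ∧ A *ᵥ star w = (μ : ℂ) • w := by
  set Jv := A *ᵥ star v
  have hJJ : A *ᵥ star Jv = c • v := by rw [mulVec_star_mulVec_star, hc]
  -- `c ⟪v, v⟫ = ⟪v, J J v⟫ = ⟪J v, J v⟫` by the symmetry of `A`
  have hc_mul : c * (star v ⬝ᵥ v) = star Jv ⬝ᵥ Jv := by
    rw [← smul_eq_mul, ← dotProduct_smul, ← hJJ, hA.dotProduct_mulVec_comm]
  obtain ⟨r, hr, rfl⟩ : ∃ r : ℝ, 0 ≤ r ∧ (r : ℂ) = c := by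
    have hpos : 0 < star v ⬝ᵥ v := dotProduct_star_self_pos_iff.mpr hv
    have : 0 ≤ c := by
      rw [← mul_div_cancel_right₀ c hpos.ne', hc_mul]
      exact div_nonneg (dotProduct_star_self_nonneg _) hpos.le
    simpa [eq_comm] using RCLike.nonneg_iff_exists_ofReal.mp this
  set s := Real.sqrt r
  have hs : ((s : ℂ) * s) = r := by rw [← Complex.ofReal_mul, Real.mul_self_sqrt hr]
  by_cases hw : (s : ℂ) • v + Jv = 0
  · -- `J v = -s v`, so `J (i v) = -i J v = s (i v)`
    refine ⟨Complex.I • v, W.smul_mem _ hvW, smul_ne_zero Complex.I_ne_zero hv, s,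
      Real.sqrt_nonneg r, ?_⟩
    rw [star_smul, mulVec_smul]
    change star Complex.I • Jv = _
    rw [eq_neg_of_add_eq_zero_right hw, Complex.star_def, Complex.conj_I]
    module
  · refine ⟨(s : ℂ) • v + Jv, W.add_mem (W.smul_mem _ hvW) (hW v hvW), hw, s,
      Real.sqrt_nonneg r, ?_⟩
    rw [star_add, mulVec_add, mulVec_star_ofReal_smul, hJJ, ← hs]
    module

theorem IsSymm.exists_coneigenvector (hA : A.IsSymm) {W : Submodule ℂ (ι → ℂ)} (hW0 : W ≠ ⊥)
    (hW : ∀ w ∈ W, A *ᵥ star w ∈ W) :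
    ∃ w ∈ W, w ≠ 0 ∧ ∃ μ : ℝ, 0 ≤ μ ∧ A *ᵥ star w = (μ : ℂ) • w := by
  have hGW : ∀ w ∈ W, (A * A.map (starRingEnd ℂ)).mulVecLin w ∈ W := fun w hw => by
    rw [mulVecLin_apply, ← mulVec_star_mulVec_star]
    exact hW _ (hW w hw)
  have := Submodule.nontrivial_iff_ne_bot.mpr hW0
  obtain ⟨c, hc⟩ :=
    Module.End.exists_eigenvalue ((A * A.map (starRingEnd ℂ)).mulVecLin.restrict hGW)
  obtain ⟨⟨v, hvW⟩, hv⟩ := hc.exists_hasEigenvector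
  refine hA.exists_coneigenvector_of_mulVec_eq_smul hW hvW (by simpa using hv.2) (c := c) ?_
  simpa using congrArg Subtype.val hv.apply_eq_smul

theorem IsSymm.exists_orthonormal_coneigenvectors (hA : A.IsSymm) {k : ℕ}
    (hk : k ≤ Fintype.card ι) :
    ∃ (u : Fin k → ι → ℂ) (μ : Fin k → ℝ), (∀ i j, star (u i) ⬝ᵥ u j = if i = j then 1 else 0) ∧
      0 ≤ μ ∧ ∀ i, A *ᵥ star (u i) = (μ i : ℂ) • u i := by
  induction k with
  | zero => exact ⟨Fin.elim0, Fin.elim0, fun i => i.elim0, fun i => i.elim0, fun i => i.elim0⟩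
  | succ k ih =>
    obtain ⟨u, μ, hu, hμ, hAu⟩ := ih (Nat.le_of_succ_le hk)
    set W := LinearMap.ker (of fun i => star (u i)).mulVecLin
    have hmem : ∀ w, w ∈ W ↔ ∀ i, star (u i) ⬝ᵥ w = 0 := fun w => by
      simp only [W, LinearMap.mem_ker, mulVecLin_apply, funext_iff, Pi.zero_apply]
      rfl
    have hW0 : W ≠ ⊥ := fun h => by
      have := LinearMap.finrank_le_finrank_of_injective (LinearMap.ker_eq_bot.mp h)
      simp only [Module.finrank_fintype_fun_eq_card, Fintype.card_fin] at this
      omega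
    -- `⟪u i, J w⟫ = ⟪w, J (u i)⟫ = μ i ⟪w, u i⟫` by the symmetry of `A`
    have hW : ∀ w ∈ W, A *ᵥ star w ∈ W := fun w hw => (hmem _).mpr fun i => by
      rw [hA.dotProduct_mulVec_comm, hAu, dotProduct_smul, star_dotProduct,
        (hmem w).mp hw, star_zero, smul_zero]
    obtain ⟨w, hwW, hw0, ν, hν, hAw⟩ := hA.exists_coneigenvector hW0 hW
    obtain ⟨r, hr⟩ := exists_ofReal_smul_star_dotProduct_self_eq_one hw0
    refine ⟨vecCons ((r : ℂ) • w) u, vecCons ν μ,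
      star_dotProduct_vecCons_eq_ite hu hr fun i => ?_, fun i => ?_, fun i => ?_⟩
    · rw [dotProduct_smul, (hmem w).mp hwW, smul_zero]
    · induction i using Fin.cases
      · exact hν
      · exact hμ _
    · induction i using Fin.cases
      · rw [cons_val_zero, cons_val_zero, mulVec_star_ofReal_smul, hAw, smul_comm]
      · exact hAu _

variable [DecidableEq ι]

theorem IsSymm.exists_takagi_factorization (hA : A.IsSymm) :
    ∃ U ∈ unitaryGroup ι ℂ, ∃ d : ι → ℝ, 0 ≤ d ∧ A = U * diagonal (fun i => (d i : ℂ)) * Uᵀ := by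
  obtain ⟨u, μ, hu, hμ, hAu⟩ := hA.exists_orthonormal_coneigenvectors le_rfl
  set e := Fintype.equivFin ι
  set U : Matrix ι ι ℂ := of fun j i => u (e i) j
  have hU : U ∈ unitaryGroup ι ℂ := by
    rw [mem_unitaryGroup_iff']
    ext i i'
    simpa [U, mul_apply, dotProduct, e.injective.eq_iff, one_apply] using hu (e i) (e i')
  have hAU : A * U.map (starRingEnd ℂ) = U * diagonal (fun i => (μ (e i) : ℂ)) := by
    ext j i
    rw [mul_diagonal]
    simpa [U, mul_apply, mulVec, dotProduct, mul_comm] using congrFun (hAu (e i)) j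
  have hUconj : U.map (starRingEnd ℂ) * Uᵀ = 1 := by
    have := congrArg (fun M : Matrix ι ι ℂ => M.map (starRingEnd ℂ))
      (show U * Uᴴ = 1 from hU.2)
    simpa [map_mul] using this
  refine ⟨U, hU, fun i => μ (e i), fun i => hμ (e i), ?_⟩
  rw [← hAU, Matrix.mul_assoc, hUconj, Matrix.mul_one]

theorem sum_norm_sq_apply_eq_one_of_mem_unitaryGroup {U : Matrix ι ι ℂ}
    (hU : U ∈ unitaryGroup ι ℂ) (p : ι) : ∑ j, ‖U j p‖ ^ 2 = 1 := by
  have h := congrFun (congrFun (mem_unitaryGroup_iff'.mp hU) p) p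
  simp only [mul_apply, star_apply, one_apply_eq, Complex.star_def, Complex.conj_mul'] at h
  exact_mod_cast h

theorem PosSemidef.eq_mul_diagonal_mul_conjTranspose_of_mul_self_eq {U : Matrix ι ι ℂ}
    (hU : U ∈ unitaryGroup ι ℂ) {d : ι → ℝ} (hd : 0 ≤ d) {P : Matrix ι ι ℂ} (hP : P.PosSemidef)
    (hPsq : P * P = (U * diagonal (fun i => (d i : ℂ)) * Uᵀ) *
      (U * diagonal (fun i => (d i : ℂ)) * Uᵀ).map (starRingEnd ℂ)) :
    P = U * diagonal (fun i => (d i : ℂ)) * Uᴴ := by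
  set D := diagonal (fun i => (d i : ℂ))
  have hUU : Uᴴ * U = 1 := mem_unitaryGroup_iff'.mp hU
  have hUUT : Uᵀ * U.map (starRingEnd ℂ) = 1 := by
    simpa [map_mul] using congrArg (fun M : Matrix ι ι ℂ => M.map (starRingEnd ℂ)) hUU
  have hconj : (U * D * Uᵀ).map (starRingEnd ℂ) = U.map (starRingEnd ℂ) * D * Uᴴ := by
    simp only [Matrix.map_mul, map_zero, diagonal_map, Complex.conj_ofReal, transpose_map, D]
    rfl
  have hD : D.PosSemidef := posSemidef_diagonal_iff.mpr fun i => Complex.zero_le_real.mpr (hd i)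
  have hDU : (U * D * Uᴴ).PosSemidef := hD.mul_mul_conjTranspose_same U
  open scoped MatrixOrder in
  refine (CFC.sq_eq_sq_iff P _ hP.nonneg hDU.nonneg).mp ?_
  rw [sq, sq, hPsq, hconj]
  simp only [Matrix.mul_assoc]
  rw [← Matrix.mul_assoc Uᵀ, hUUT, ← Matrix.mul_assoc Uᴴ, hUU, Matrix.one_mul]

theorem sub_sum_erase_le_sum_norm_diag_mul_diagonal_mul_transpose
    {U : Matrix ι ι ℂ} (hU : U ∈ unitaryGroup ι ℂ) {d : ι → ℝ} (hd : 0 ≤ d) (i : ι) :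
    d i - ∑ p ∈ univ.erase i, d p ≤ ∑ j, ‖(U * diagonal (fun p => (d p : ℂ)) * Uᵀ) j j‖ := by
  have hdiag : ∀ j, (U * diagonal (fun p => (d p : ℂ)) * Uᵀ) j j = ∑ p, (d p : ℂ) * U j p ^ 2 :=
    fun j => by
      rw [mul_apply]
      exact sum_congr rfl fun p _ => by rw [mul_diagonal, transpose_apply]; ring
  have hnorm : ∀ j p, ‖(d p : ℂ) * U j p ^ 2‖ = d p * ‖U j p‖ ^ 2 := fun j p => by
    rw [norm_mul, norm_pow, Complex.norm_real, Real.norm_of_nonneg (hd p)]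
  calc d i - ∑ p ∈ univ.erase i, d p
      = ∑ j, (‖(d i : ℂ) * U j i ^ 2‖ - ∑ p ∈ univ.erase i, ‖(d p : ℂ) * U j p ^ 2‖) := by
        simp only [hnorm]
        rw [sum_sub_distrib, sum_comm (s := univ) (t := univ.erase i)]
        simp only [← mul_sum, sum_norm_sq_apply_eq_one_of_mem_unitaryGroup hU, mul_one]
    _ ≤ ∑ j, ‖(U * diagonal (fun p => (d p : ℂ)) * Uᵀ) j j‖ := sum_le_sum fun j _ => by
        rw [hdiag]
        exact norm_sub_sum_erase_norm_le_norm_sum (mem_univ i) fun p => (d p : ℂ) * U j p ^ 2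

end Matrix

theorem stmt_11_general (N ℓ : ℕ) [NeZero ℓ]
    (ω : Matrix (Fin N) (Fin N) ℂ) (hωsym : ω = ωᵀ)
    (x : Fin ℓ → (Fin N → ℂ))
    (η : Matrix (Fin ℓ) (Fin ℓ) ℂ)
    (hη : η = Matrix.of fun j k =>
      dotProduct (star (x j)) (ω.mulVec (star (x k))))
    (P : Matrix (Fin ℓ) (Fin ℓ) ℂ) (hP : P.PosSemidef)
    (hPsq : P * P = η * η.map (starRingEnd ℂ))
    (lam : Fin ℓ → ℝ)
    (hspec : P.charpoly = ∏ i, (Polynomial.X - Polynomial.C (lam i : ℂ))) :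
    lam 0 - ∑ p ∈ Finset.univ.erase 0, lam p ≤ ∑ j, ‖η j j‖ := by
  have hηsym : η.IsSymm := hη ▸ IsSymm.of_star_dotProduct_mulVec_star hωsym.symm x
  obtain ⟨U, hU, d, hd, hηU⟩ := hηsym.exists_takagi_factorization
  have hPU := hP.eq_mul_diagonal_mul_conjTranspose_of_mul_self_eq hU hd (hηU ▸ hPsq)
  have hroots : univ.val.map lam = univ.val.map d := by
    refine Multiset.map_injective Complex.ofReal_injective ?_
    simp only [Multiset.map_map]
    refine Polynomial.map_univ_eq_of_prod_X_sub_C_eq (a := fun i => (lam i : ℂ))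
      (b := fun i => (d i : ℂ)) ?_
    rw [← hspec, hPU, charpoly_mul_comm, ← Matrix.mul_assoc, show Uᴴ * U = 1 from hU.1,
      Matrix.one_mul, charpoly_diagonal]
  obtain ⟨i, -, hi⟩ := Multiset.mem_map.mp (hroots ▸ Multiset.mem_map_of_mem lam (mem_univ_val 0))
  have hsum : ∑ p, lam p = ∑ p, d p := congrArg Multiset.sum hroots
  rw [sum_erase_eq_sub (mem_univ 0), hsum, ← hi, ← sum_erase_eq_sub (mem_univ i), hηU]
  exact sub_sum_erase_le_sum_norm_diag_mul_diagonal_mul_transpose hU hd i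

/-- lower bound ∑_j |η_{jj}| ≥ λ₀ − ∑_{p≥1} λ_p for any ensemble of ρ, where
the λ's are the nonincreasing eigenvalues of (η conj(η))^{1/2}. -/
theorem stmt_11 (N ℓ : ℕ) [NeZero ℓ] (ρ : Matrix (Fin N) (Fin N) ℂ)
    (hρ : ρ.PosSemidef) (htr : ρ.trace = 1)
    (ω : Matrix (Fin N) (Fin N) ℂ) (hω : ω * ωᴴ = 1) (hωsym : ω = ωᵀ)
    (x : Fin ℓ → (Fin N → ℂ))
    (hx : ρ = ∑ j, Matrix.vecMulVec (x j) (star (x j)))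
    (η : Matrix (Fin ℓ) (Fin ℓ) ℂ)
    (hη : η = Matrix.of fun j k =>
      dotProduct (star (x j)) (ω.mulVec (star (x k))))
    (P : Matrix (Fin ℓ) (Fin ℓ) ℂ) (hP : P.PosSemidef)
    (hPsq : P * P = η * η.map (starRingEnd ℂ))
    (lam : Fin ℓ → ℝ) (hmono : Antitone lam) (hnonneg : ∀ i, 0 ≤ lam i)
    (hspec : P.charpoly = ∏ i, (Polynomial.X - Polynomial.C (lam i : ℂ))) :
    lam 0 - ∑ p ∈ Finset.univ.erase 0, lam p ≤ ∑ j, ‖η j j‖ :=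
  stmt_11_general N ℓ ω hωsym x η hη P hP hPsq lam hspec
end

section
/- Let H be a Hermitian operator on a finite-dimensional complex Hilbert space, Θ = ω∘conj an antiunitary operator with ω unitary and ω = ωᵀ (bosonic time reversal), and suppose Θ H Θ^{-1} = H. If λ is an eigenvalue of H whose eigenspace is one-dimensional with normalized eigenvector v, then |v† ω conj(v)| = 1. -/
open Matrix

/-!
The antiunitary Θ = ω ∘ conj commutes with H, so it maps the λ-eigenspace of H (λ real) into
itself. Nondegeneracy forces Θ v = c • v, and since Θ preserves norms, |c| = 1. Finally
v† ω conj(v) = ⟨v, Θ v⟩ = c.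
-/

section TimeReversal

variable {𝕜 n : Type*} [RCLike 𝕜] [Fintype n]

lemma map_conj_mulVec_star (H : Matrix n n 𝕜) (v : n → 𝕜) :
    H.map (starRingEnd 𝕜) *ᵥ star v = star (H *ᵥ v) := by
  funext i
  exact (RingHom.map_mulVec (starRingEnd 𝕜) H v i).symm

lemma mul_eq_mul_map_conj [DecidableEq n] {H ω : Matrix n n 𝕜} (hω : ωᴴ * ω = 1)
    (hsym : ω * H.map (starRingEnd 𝕜) * ωᴴ = H) :
    H * ω = ω * H.map (starRingEnd 𝕜) := by
  conv_lhs => rw [← hsym, Matrix.mul_assoc, hω, Matrix.mul_one]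

lemma mulVec_mulVec_star_eq_smul [DecidableEq n] {H ω : Matrix n n 𝕜} (hω : ωᴴ * ω = 1)
    (hsym : ω * H.map (starRingEnd 𝕜) * ωᴴ = H) {lam : ℝ} {v : n → 𝕜}
    (hv : H *ᵥ v = (lam : 𝕜) • v) :
    H *ᵥ (ω *ᵥ star v) = (lam : 𝕜) • (ω *ᵥ star v) := by
  rw [mulVec_mulVec, mul_eq_mul_map_conj hω hsym, ← mulVec_mulVec,
    map_conj_mulVec_star, hv, star_smul, RCLike.star_def, RCLike.conj_ofReal, mulVec_smul]

lemma star_mulVec_dotProduct_mulVec [DecidableEq n] {ω : Matrix n n 𝕜} (hω : ωᴴ * ω = 1) (x : n → 𝕜) :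
    star (ω *ᵥ x) ⬝ᵥ (ω *ᵥ x) = star x ⬝ᵥ x := by
  rw [star_mulVec, dotProduct_mulVec, vecMul_vecMul, hω, vecMul_one]

lemma norm_star_dotProduct_eq_one_of_eq_smul {v w : n → 𝕜} {c : 𝕜}
    (hv : star v ⬝ᵥ v = 1) (hw : star w ⬝ᵥ w = 1) (hc : w = c • v) :
    ‖star v ⬝ᵥ w‖ = 1 := by
  have hc_sq : (‖c‖ : 𝕜) ^ 2 = 1 := by
    rw [← RCLike.conj_mul, ← hw, hc, star_smul, smul_dotProduct, dotProduct_smul, hv,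
      RCLike.star_def, smul_eq_mul, smul_eq_mul, mul_one]
  rw [hc, dotProduct_smul, hv, smul_eq_mul, mul_one]
  exact (pow_eq_one_iff_of_nonneg (norm_nonneg c) two_ne_zero).mp (by exact_mod_cast hc_sq)

end TimeReversal

theorem stmt_19_general (N : ℕ) (H : Matrix (Fin N) (Fin N) ℂ)
    (ω : Matrix (Fin N) (Fin N) ℂ) (hω' : ωᴴ * ω = 1)
    (hsym : ω * H.map (starRingEnd ℂ) * ωᴴ = H)
    (lam : ℝ) (v : Fin N → ℂ)
    (hv : H.mulVec v = (lam : ℂ) • v)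
    (hnorm : dotProduct (star v) v = 1)
    (hnondeg : ∀ w : Fin N → ℂ, H.mulVec w = (lam : ℂ) • w → ∃ c : ℂ, w = c • v) :
    ‖dotProduct (star v) (ω.mulVec (star v))‖ = 1 := by
  obtain ⟨c, hc⟩ := hnondeg _ (mulVec_mulVec_star_eq_smul hω' hsym hv)
  have hunit : star (ω *ᵥ star v) ⬝ᵥ (ω *ᵥ star v) = 1 := by
    rw [star_mulVec_dotProduct_mulVec hω', dotProduct_comm, star_star, hnorm]
  exact norm_star_dotProduct_eq_one_of_eq_smul hnorm hunit hc

/-- a nondegenerate eigenstate of a Hamiltonian with bosonic time-reversal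
symmetry (Θ = ω∘conj, ω unitary symmetric, ΘHΘ⁻¹ = H, i.e. ω·conj(H)·ω† = H) has maximal
concurrence: |v† ω conj(v)| = 1 for the normalized eigenvector v. -/
theorem stmt_19 (N : ℕ) (H : Matrix (Fin N) (Fin N) ℂ) (hH : H.IsHermitian)
    (ω : Matrix (Fin N) (Fin N) ℂ) (hω : ω * ωᴴ = 1) (hω' : ωᴴ * ω = 1) (hωsym : ω = ωᵀ)
    (hsym : ω * H.map (starRingEnd ℂ) * ωᴴ = H)
    (lam : ℝ) (v : Fin N → ℂ)
    (hv : H.mulVec v = (lam : ℂ) • v)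
    (hnorm : dotProduct (star v) v = 1)
    (hnondeg : ∀ w : Fin N → ℂ, H.mulVec w = (lam : ℂ) • w → ∃ c : ℂ, w = c • v) :
    ‖dotProduct (star v) (ω.mulVec (star v))‖ = 1 :=
  stmt_19_general N H ω hω' hsym lam v hv hnorm hnondeg
end
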